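/- Let α ∈ (0,1) and let E₁, E₂ ⊆ ℝ^d be sets of finite fractional perimeter with |E₁ ∩ E₂| = 0 and |E₁| > 0, |E₂| > 0. Then 𝔓_α(E₁ ∪ E₂) < 𝔓_α(E₁) + 𝔓_α(E₂); in other words, every set of finite fractional perimeter is indecomposable with respect to 𝔓_α. -/
import Mathlib


open MeasureTheory Metric Set Filter
open scoped ENNReal Topology

set_option maxHeartbeats 1000000

noncomputable section

/-- The fractional perimeter `𝔓_α(E) = 2 ∫_E ∫_{Eᶜ} |x-y|^{-(d+α)} dy dx`. -/
def fracPer (d : ℕ) (α : ℝ) (A : Set (EuclideanSpace ℝ (Fin d))) : ℝ≥0∞ :=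
  2 * ∫⁻ x in A, ∫⁻ y in Aᶜ, ENNReal.ofReal (‖x - y‖ ^ (-((d : ℝ) + α)))

/-- The kernel of the fractional perimeter. -/
def fracKer (d : ℕ) (α : ℝ) (x y : EuclideanSpace ℝ (Fin d)) : ℝ≥0∞ :=
  ENNReal.ofReal (‖x - y‖ ^ (-((d : ℝ) + α)))

lemma fracKer_meas (d : ℕ) (α : ℝ) :
    Measurable (fun p : EuclideanSpace ℝ (Fin d) × EuclideanSpace ℝ (Fin d) =>
      fracKer d α p.1 p.2) := by
  unfold fracKer
  exact (((continuous_fst.sub continuous_snd).norm.measurable).pow_const _).ennreal_ofReal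

lemma fracKer_meas_left (d : ℕ) (α : ℝ) (x : EuclideanSpace ℝ (Fin d)) :
    Measurable (fun y => fracKer d α x y) := by
  unfold fracKer
  exact ((measurable_const.sub measurable_id).norm.pow_const _).ennreal_ofReal

lemma fracKer_inner_meas (d : ℕ) (α : ℝ) (S : Set (EuclideanSpace ℝ (Fin d))) :
    Measurable (fun x => ∫⁻ y in S, fracKer d α x y) :=
  Measurable.lintegral_prod_right' (fracKer_meas d α)

lemma fracPer_eq (d : ℕ) (α : ℝ) (A : Set (EuclideanSpace ℝ (Fin d))) :
    fracPer d α A = 2 * ∫⁻ x in A, ∫⁻ y in Aᶜ, fracKer d α x y := rfl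

lemma fracPer_congr {d : ℕ} {α : ℝ} {A B : Set (EuclideanSpace ℝ (Fin d))}
    (h : A =ᵐ[volume] B) : fracPer d α A = fracPer d α B := by
  rw [fracPer_eq, fracPer_eq]
  congr 1
  have hc : Aᶜ =ᵐ[(volume : Measure (EuclideanSpace ℝ (Fin d)))] Bᶜ := h.compl
  calc ∫⁻ x in A, ∫⁻ y in Aᶜ, fracKer d α x y
      = ∫⁻ x in A, ∫⁻ y in Bᶜ, fracKer d α x y := by
        refine lintegral_congr fun x => setLIntegral_congr hc
    _ = ∫⁻ x in B, ∫⁻ y in Bᶜ, fracKer d α x y := setLIntegral_congr h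

/-- Existence of a bounded piece of positive measure. -/
lemma exists_ball_pos {d : ℕ} {E : Set (EuclideanSpace ℝ (Fin d))}
    (h : 0 < volume E) : ∃ n : ℕ, 0 < volume (E ∩ ball (0 : EuclideanSpace ℝ (Fin d)) n) := by
  by_contra hcon
  push_neg at hcon
  have hcov : E ⊆ ⋃ n : ℕ, E ∩ ball (0 : EuclideanSpace ℝ (Fin d)) n := by
    intro x hx
    refine mem_iUnion.2 ⟨⌈‖x‖⌉₊ + 1, hx, ?_⟩
    rw [mem_ball, dist_zero_right]
    push_cast
    have := Nat.le_ceil ‖x‖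
    linarith
  have hz : ∀ n : ℕ, volume (E ∩ ball (0 : EuclideanSpace ℝ (Fin d)) n) = 0 :=
    fun n => nonpos_iff_eq_zero.1 (hcon n)
  have h0 : volume (⋃ n : ℕ, E ∩ ball (0 : EuclideanSpace ℝ (Fin d)) n) = 0 :=
    measure_iUnion_null hz
  exact absurd (measure_mono_null hcov h0) h.ne'

/-- The interaction integral between two disjoint sets of positive measure is positive. -/
lemma interaction_pos {d : ℕ} {α : ℝ} (hα : 0 < α) {E₁ E₂ : Set (EuclideanSpace ℝ (Fin d))}
    (hdisj : Disjoint E₁ E₂) (hpos₁ : 0 < volume E₁) (hpos₂ : 0 < volume E₂) :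
    0 < ∫⁻ x in E₁, ∫⁻ y in E₂, fracKer d α x y := by
  obtain ⟨n₁, hn₁⟩ := exists_ball_pos hpos₁
  obtain ⟨n₂, hn₂⟩ := exists_ball_pos hpos₂
  set n : ℕ := max n₁ n₂ + 1 with hn
  have hnpos : (0 : ℝ) < n := by positivity
  set F₁ := E₁ ∩ ball (0 : EuclideanSpace ℝ (Fin d)) n with hF₁
  set F₂ := E₂ ∩ ball (0 : EuclideanSpace ℝ (Fin d)) n with hF₂
  have hb : ∀ m : ℕ, m ≤ n → ball (0 : EuclideanSpace ℝ (Fin d)) m ⊆ ball 0 n := by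
    intro m hm
    exact ball_subset_ball (by exact_mod_cast hm)
  have hF₁pos : 0 < volume F₁ :=
    lt_of_lt_of_le hn₁ (measure_mono (inter_subset_inter_right _
      (hb n₁ (le_trans (le_max_left _ _) (Nat.le_succ _)))))
  have hF₂pos : 0 < volume F₂ :=
    lt_of_lt_of_le hn₂ (measure_mono (inter_subset_inter_right _
      (hb n₂ (le_trans (le_max_right _ _) (Nat.le_succ _)))))
  set s : ℝ := (d : ℝ) + α with hs
  set c : ℝ≥0∞ := ENNReal.ofReal ((2 * n) ^ (-s)) with hc
  have hcpos : 0 < c := by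
    rw [hc]
    exact ENNReal.ofReal_pos.2 (Real.rpow_pos_of_pos (by linarith) _)
  -- pointwise bound on the kernel
  have hker : ∀ x ∈ F₁, ∀ y ∈ F₂, c ≤ fracKer d α x y := by
    intro x hx y hy
    have hx' : ‖x‖ < n := by simpa [mem_ball, dist_zero_right] using hx.2
    have hy' : ‖y‖ < n := by simpa [mem_ball, dist_zero_right] using hy.2
    have hxy : ‖x - y‖ ≤ 2 * n := by
      have := norm_sub_le x y
      linarith
    have hyx : x ≠ y := fun h => (Set.disjoint_left.1 hdisj hx.1) (h ▸ hy.1)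
    have hxy0 : 0 < ‖x - y‖ := by
      rw [norm_pos_iff, sub_ne_zero]
      exact hyx
    unfold fracKer
    rw [hc]
    exact ENNReal.ofReal_le_ofReal (Real.rpow_le_rpow_of_nonpos hxy0 hxy (neg_nonpos.2 (by positivity)))
  -- inner bound
  have hinner : ∀ x ∈ F₁, c * volume F₂ ≤ ∫⁻ y in F₂, fracKer d α x y := by
    intro x hx
    have h1 : ∫⁻ _ in F₂, c ≤ ∫⁻ y in F₂, fracKer d α x y :=
      setLIntegral_mono (fracKer_meas_left d α x) (hker x hx)
    rwa [setLIntegral_const] at h1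
  have key : c * volume F₂ * volume F₁ ≤ ∫⁻ x in F₁, ∫⁻ y in F₂, fracKer d α x y := by
    have h1 : ∫⁻ _ in F₁, c * volume F₂ ≤ ∫⁻ x in F₁, ∫⁻ y in F₂, fracKer d α x y :=
      setLIntegral_mono (fracKer_inner_meas d α F₂) hinner
    rwa [setLIntegral_const] at h1
  have hmono : ∫⁻ x in F₁, ∫⁻ y in F₂, fracKer d α x y
      ≤ ∫⁻ x in E₁, ∫⁻ y in E₂, fracKer d α x y :=
    le_trans (lintegral_mono fun x => lintegral_mono_set inter_subset_left)
      (lintegral_mono_set inter_subset_left)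
  refine lt_of_lt_of_le (lt_of_lt_of_le ?_ key) hmono
  exact ENNReal.mul_pos (ENNReal.mul_pos hcpos.ne' hF₂pos.ne').ne' hF₁pos.ne'

/-- The disjoint case of the main theorem. -/
lemma statement7_disjoint (d : ℕ) (α : ℝ) (hα : α ∈ Ioo (0 : ℝ) 1)
    (E₁ E₂ : Set (EuclideanSpace ℝ (Fin d))) (h₁ : MeasurableSet E₁) (h₂ : MeasurableSet E₂)
    (hfin₁ : fracPer d α E₁ < ⊤) (hfin₂ : fracPer d α E₂ < ⊤)
    (hdisj : Disjoint E₁ E₂) (hpos₁ : 0 < volume E₁) (hpos₂ : 0 < volume E₂) :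
    fracPer d α (E₁ ∪ E₂) < fracPer d α E₁ + fracPer d α E₂ := by
  set B := E₁ ∪ E₂ with hB
  set I : Set (EuclideanSpace ℝ (Fin d)) → Set (EuclideanSpace ℝ (Fin d)) → ℝ≥0∞ :=
    fun A S => ∫⁻ x in A, ∫⁻ y in S, fracKer d α x y with hI
  have hd12 : ∀ x, x ∈ E₁ → x ∉ E₂ := fun x hx => Set.disjoint_left.1 hdisj hx
  -- decompositions of the complements
  have hc1 : E₁ᶜ = Bᶜ ∪ E₂ := by
    ext x
    simp only [hB, compl_union, mem_compl_iff, mem_union, mem_inter_iff]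
    have := hd12 x
    tauto
  have hc2 : E₂ᶜ = Bᶜ ∪ E₁ := by
    ext x
    simp only [hB, compl_union, mem_compl_iff, mem_union, mem_inter_iff]
    have := hd12 x
    tauto
  have hd1 : Disjoint Bᶜ E₂ := by
    rw [hB, compl_union]
    exact Disjoint.mono_left inter_subset_right disjoint_compl_left
  have hd2 : Disjoint Bᶜ E₁ := by
    rw [hB, compl_union]
    exact Disjoint.mono_left inter_subset_left disjoint_compl_left
  have split1 : fracPer d α E₁ = 2 * (I E₁ Bᶜ + I E₁ E₂) := by
    rw [fracPer_eq]
    congr 1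
    rw [hI]
    simp only
    rw [← lintegral_add_right _ (fracKer_inner_meas d α E₂)]
    refine lintegral_congr fun x => ?_
    rw [hc1, lintegral_union h₂ hd1]
  have split2 : fracPer d α E₂ = 2 * (I E₂ Bᶜ + I E₂ E₁) := by
    rw [fracPer_eq]
    congr 1
    rw [hI]
    simp only
    rw [← lintegral_add_right _ (fracKer_inner_meas d α E₁)]
    refine lintegral_congr fun x => ?_
    rw [hc2, lintegral_union h₁ hd2]
  have splitB : fracPer d α B = 2 * (I E₁ Bᶜ + I E₂ Bᶜ) := by
    rw [fracPer_eq]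
    congr 1
    rw [hI]
    simp only
    exact lintegral_union h₂ hdisj
  have keyeq : fracPer d α E₁ + fracPer d α E₂
      = fracPer d α B + 2 * (I E₁ E₂ + I E₂ E₁) := by
    rw [split1, split2, splitB]; ring
  have hBfin : fracPer d α B < ⊤ := by
    have hle : fracPer d α B ≤ fracPer d α E₁ + fracPer d α E₂ := by
      rw [keyeq]; exact le_self_add
    exact lt_of_le_of_lt hle (ENNReal.add_lt_top.2 ⟨hfin₁, hfin₂⟩)
  have hIpos : 0 < I E₁ E₂ := interaction_pos hα.1 hdisj hpos₁ hpos₂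
  rw [keyeq]
  refine ENNReal.lt_add_right hBfin.ne ?_
  refine (ENNReal.mul_pos (by norm_num) ?_).ne'
  exact (lt_of_lt_of_le hIpos le_self_add).ne'

/-- Every set of finite fractional perimeter is indecomposable: for an essentially disjoint
union of two sets of positive measure and finite fractional perimeter, the fractional
perimeter of the union is strictly smaller than the sum of the fractional perimeters. -/
theorem statement7 (d : ℕ) (α : ℝ) (hα : α ∈ Ioo (0 : ℝ) 1)
    (E₁ E₂ : Set (EuclideanSpace ℝ (Fin d))) (h₁ : MeasurableSet E₁) (h₂ : MeasurableSet E₂)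
    (hfin₁ : fracPer d α E₁ < ⊤) (hfin₂ : fracPer d α E₂ < ⊤)
    (hdisj : volume (E₁ ∩ E₂) = 0) (hpos₁ : 0 < volume E₁) (hpos₂ : 0 < volume E₂) :
    fracPer d α (E₁ ∪ E₂) < fracPer d α E₁ + fracPer d α E₂ := by
  set E₂' := E₂ \ E₁ with hE₂'
  have hae : E₂' =ᵐ[(volume : Measure (EuclideanSpace ℝ (Fin d)))] E₂ :=
    diff_ae_eq_self.2 (by rwa [inter_comm] at hdisj)
  have hU : E₁ ∪ E₂' = E₁ ∪ E₂ := union_diff_self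
  have hP : fracPer d α E₂' = fracPer d α E₂ := fracPer_congr hae
  have hV : volume E₂' = volume E₂ := measure_congr hae
  rw [← hU, ← hP]
  exact statement7_disjoint d α hα E₁ E₂' h₁ (h₂.diff h₁) hfin₁ (hP ▸ hfin₂)
    disjoint_sdiff_right hpos₁ (hV ▸ hpos₂)

end
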